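/- Strict positivity of created entanglement: if ρ on H_A ⊗ H_B is not a classical-quantum state, then for every complete set of rank-one orthogonal projectors {Π_i} on H_A, S(Σ_i (Π_i⊗I)ρ(Π_i⊗I)) − S(ρ) > 0. -/

import Mathlib

open Matrix Kronecker BigOperators
open scoped ComplexOrder

noncomputable section

/-- The von Neumann entropy `S(ρ) = -Tr[ρ log ρ]`, computed via eigenvalues
(junk value `0` if `ρ` is not Hermitian). -/
def vnEntropy {n : Type*} [Fintype n] [DecidableEq n] (ρ : Matrix n n ℂ) : ℝ :=
  if h : ρ.IsHermitian then ∑ i, Real.negMulLog (h.eigenvalues i) else 0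

/-- The matrix logarithm via the spectral decomposition (junk value `0` if not Hermitian). -/
def matLog {n : Type*} [Fintype n] [DecidableEq n] (ρ : Matrix n n ℂ) : Matrix n n ℂ :=
  if h : ρ.IsHermitian then
    (h.eigenvectorUnitary : Matrix n n ℂ) *
      Matrix.diagonal (fun i => (Real.log (h.eigenvalues i) : ℂ)) *
      (star (h.eigenvectorUnitary : Matrix n n ℂ))
  else 0

/-- The quantum relative entropy `S(ρ‖σ) = Tr[ρ log ρ] - Tr[ρ log σ]` (finite formula). -/
def relEntropy {n : Type*} [Fintype n] [DecidableEq n] (ρ σ : Matrix n n ℂ) : ℝ :=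
  ((ρ * (matLog ρ - matLog σ)).trace).re

/-- A density matrix: positive semidefinite with unit trace. -/
def IsDensityMatrix {n : Type*} [Fintype n] (ρ : Matrix n n ℂ) : Prop :=
  ρ.PosSemidef ∧ ρ.trace = 1

/-- `|x⟩⟨y|`. -/
def ketbra {n : Type*} (x y : n → ℂ) : Matrix n n ℂ := Matrix.vecMulVec x (star y)

/-- The rank-one projector `Π_i = |v i⟩⟨v i|`. -/
def proj {ι n : Type*} (v : ι → n → ℂ) (i : ι) : Matrix n n ℂ := ketbra (v i) (v i)

/-- The family `v` is orthonormal. -/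
def Orthonormal' {ι n : Type*} [Fintype n] [DecidableEq ι] (v : ι → n → ℂ) : Prop :=
  ∀ i j, star (v i) ⬝ᵥ v j = if i = j then (1 : ℂ) else 0

/-- The family of rank-one projectors from `v` is complete: `∑ i, Π_i = I`. -/
def Complete' {ι n : Type*} [Fintype ι] [Fintype n] [DecidableEq n] (v : ι → n → ℂ) : Prop :=
  ∑ i, proj v i = 1

/-- The pinching `ρ ↦ ∑ i (Π_i ⊗ I) ρ (Π_i ⊗ I)` of a bipartite state,
for a von Neumann measurement on the first subsystem. -/
def pinch {ι A B : Type*} [Fintype ι] [Fintype A] [Fintype B] [DecidableEq B]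
    (v : ι → A → ℂ) (ρ : Matrix (A × B) (A × B) ℂ) : Matrix (A × B) (A × B) ℂ :=
  ∑ i, (proj v i ⊗ₖ (1 : Matrix B B ℂ)) * ρ * (proj v i ⊗ₖ (1 : Matrix B B ℂ))

/-- The pinching `ρ ↦ ∑ i Π_i ρ Π_i` on a single system. -/
def pinchA {ι A : Type*} [Fintype ι] [Fintype A]
    (v : ι → A → ℂ) (ρ : Matrix A A ℂ) : Matrix A A ℂ :=
  ∑ i, proj v i * ρ * proj v i

/-- Partial trace over the first tensor factor. -/
def trFst {M n : Type*} [Fintype M] (ρ : Matrix (M × n) (M × n) ℂ) : Matrix n n ℂ :=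
  fun i j => ∑ m, ρ (m, i) (m, j)

/-- Partial trace over the second tensor factor. -/
def trSnd {n B : Type*} [Fintype B] (ρ : Matrix (n × B) (n × B) ℂ) : Matrix n n ℂ :=
  fun a a' => ∑ b, ρ (a, b) (a', b)

/-- The operator `O_{ij} = (⟨i^A| ⊗ I) ρ (|j^A⟩ ⊗ I)` on `H_B`. -/
def Oij {ι A B : Type*} [Fintype A] [Fintype B] (v : ι → A → ℂ)
    (ρ : Matrix (A × B) (A × B) ℂ) (i j : ι) : Matrix B B ℂ :=
  fun k l => ∑ a, ∑ b, star (v i a) * ρ (a, k) (b, l) * v j b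

/-- The post-measurement state `ρ₂ = ∑_{i,j} |i^M⟩⟨j^M| ⊗ |i^A⟩⟨j^A| ⊗ O_{ij}`. -/
def rho2 {ι M A B : Type*} [Fintype ι] [Fintype A] [Fintype B]
    (w : ι → M → ℂ) (v : ι → A → ℂ) (ρ : Matrix (A × B) (A × B) ℂ) :
    Matrix (M × A × B) (M × A × B) ℂ :=
  ∑ i, ∑ j, ketbra (w i) (w j) ⊗ₖ (ketbra (v i) (v j) ⊗ₖ Oij v ρ i j)

/-- The outcome probability `p_i = Tr[(Π_i ⊗ I) ρ (Π_i ⊗ I)]`. -/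
def pOut {ι A B : Type*} [Fintype A] [Fintype B] [DecidableEq B]
    (v : ι → A → ℂ) (ρ : Matrix (A × B) (A × B) ℂ) (i : ι) : ℝ :=
  (((proj v i ⊗ₖ (1 : Matrix B B ℂ)) * ρ * (proj v i ⊗ₖ (1 : Matrix B B ℂ))).trace).re

/-- The post-measurement state `ρ_i = (Π_i ⊗ I) ρ (Π_i ⊗ I) / p_i`. -/
def postState {ι A B : Type*} [Fintype A] [Fintype B] [DecidableEq B]
    (v : ι → A → ℂ) (ρ : Matrix (A × B) (A × B) ℂ) (i : ι) : Matrix (A × B) (A × B) ℂ :=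
  ((pOut v ρ i : ℂ))⁻¹ • ((proj v i ⊗ₖ (1 : Matrix B B ℂ)) * ρ * (proj v i ⊗ₖ (1 : Matrix B B ℂ)))

/-- The average post-measurement entropy `∑ i p_i S(ρ_i)`. -/
def condEnt {ι A B : Type*} [Fintype ι] [Fintype A] [DecidableEq A] [Fintype B] [DecidableEq B]
    (v : ι → A → ℂ) (ρ : Matrix (A × B) (A × B) ℂ) : ℝ :=
  ∑ i, pOut v ρ i * vnEntropy (postState v ρ i)

/-- A von Neumann measurement on `H_A`: a complete set of rank-one orthogonal projectors,
given by an orthonormal basis of `H_A`. -/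
def IsMeas {A : Type*} [Fintype A] [DecidableEq A] (v : A → A → ℂ) : Prop :=
  Orthonormal' v ∧ Complete' v

/-- `ρ` is a classical-quantum state:
`ρ = ∑ i p_i |i^A⟩⟨i^A| ⊗ ρ_i^B` for some orthonormal basis of `H_A`. -/
def IsCQ {A B : Type*} [Fintype A] [DecidableEq A] [Fintype B]
    (ρ : Matrix (A × B) (A × B) ℂ) : Prop :=
  ∃ (v : A → A → ℂ) (p : A → ℝ) (σ : A → Matrix B B ℂ),
    Orthonormal' v ∧ Complete' v ∧ (∀ i, 0 ≤ p i) ∧ ∑ i, p i = 1 ∧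
    (∀ i, p i ≠ 0 → IsDensityMatrix (σ i)) ∧
    ρ = ∑ i, (p i : ℂ) • (proj v i ⊗ₖ σ i)

/-- The one-way information deficit `Δ→(ρ) = min_{Π} S(∑ᵢ (Πᵢ⊗I)ρ(Πᵢ⊗I)) - S(ρ)`. -/
def deficit {A B : Type*} [Fintype A] [DecidableEq A] [Fintype B] [DecidableEq B]
    (ρ : Matrix (A × B) (A × B) ℂ) : ℝ :=
  sInf {x : ℝ | ∃ v : A → A → ℂ, IsMeas v ∧ x = vnEntropy (pinch v ρ)} - vnEntropy ρ

/-- The quantum discord `δ→(ρ) = S(ρ^A) - S(ρ) + min_{Π} ∑ i p_i S(ρ_i)`. -/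
def discord {A B : Type*} [Fintype A] [DecidableEq A] [Fintype B] [DecidableEq B]
    (ρ : Matrix (A × B) (A × B) ℂ) : ℝ :=
  vnEntropy (trSnd ρ) - vnEntropy ρ +
    sInf {x : ℝ | ∃ v : A → A → ℂ, IsMeas v ∧ x = condEnt v ρ}

/-- The application `ρ ↦ ∑ k (I ⊗ K_k) ρ (I ⊗ K_k)†` of a channel (in Kraus form) on `B`. -/
def applyChanB {A B B' κ : Type*} [Fintype A] [DecidableEq A] [Fintype B] [Fintype κ]
    (K : κ → Matrix B' B ℂ) (ρ : Matrix (A × B) (A × B) ℂ) :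
    Matrix (A × B') (A × B') ℂ :=
  ∑ k, ((1 : Matrix A A ℂ) ⊗ₖ K k) * ρ * ((1 : Matrix A A ℂ) ⊗ₖ K k)ᴴ

end

/-!
Write `ρ = ∑ j, λ_j |w_j⟩⟨w_j|` and `Φ(ρ) = ∑ k, μ_k |u_k⟩⟨u_k|` for a Kraus map `Φ` with
`∑ K_i K_iᴴ = ∑ K_iᴴ K_i = 1`. The matrix `D k j = ∑ i, |⟨u_k| K_i |w_j⟩|²` is doubly
stochastic and `μ = D λ`, so concavity of `-x log x` gives `S(ρ) ≤ S(Φ ρ)`. By strict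
concavity, equality forces `λ_j = μ_k` whenever `D k j ≠ 0`, which says that each `K_i`
intertwines: `Φ(ρ) K_i = K_i ρ`. For the pinching the `K_i = Π_i ⊗ I` sum to `1`, hence
`Φ(ρ) = ρ`; and a state fixed by the pinching is `∑ i, Π_i ⊗ O_ii`, which is classical-quantum.
-/

section DoublyStochastic
variable {n : Type*} [Fintype n] [DecidableEq n] {D : Matrix n n ℝ} {s : Set ℝ}
  {f : ℝ → ℝ} {x : n → ℝ}

lemma sum_eq_sum_sum_smul_of_mem_colStochastic (hD : D ∈ colStochastic ℝ n) (y : n → ℝ) :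
    ∑ j, y j = ∑ k, ∑ j, D k j • y j := by
  rw [Finset.sum_comm]
  simp_rw [smul_eq_mul, ← Finset.sum_mul, sum_col_of_mem_colStochastic hD, one_mul]

theorem ConcaveOn.sum_smul_le_mulVec_of_mem_rowStochastic (hf : ConcaveOn ℝ s f)
    (hD : D ∈ rowStochastic ℝ n) (hx : ∀ j, x j ∈ s) (k : n) :
    ∑ j, D k j • f (x j) ≤ f ((D *ᵥ x) k) :=
  hf.le_map_sum (fun _ _ => nonneg_of_mem_rowStochastic hD)
    (sum_row_of_mem_rowStochastic hD k) fun j _ => hx j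

theorem ConcaveOn.sum_le_sum_mulVec_of_mem_doublyStochastic (hf : ConcaveOn ℝ s f)
    (hD : D ∈ doublyStochastic ℝ n) (hx : ∀ j, x j ∈ s) :
    ∑ j, f (x j) ≤ ∑ k, f ((D *ᵥ x) k) := by
  rw [mem_doublyStochastic_iff_mem_rowStochastic_and_mem_colStochastic] at hD
  rw [sum_eq_sum_sum_smul_of_mem_colStochastic hD.2]
  exact Finset.sum_le_sum fun k _ => hf.sum_smul_le_mulVec_of_mem_rowStochastic hD.1 hx k

theorem StrictConcaveOn.eq_mulVec_of_sum_mulVec_eq (hf : StrictConcaveOn ℝ s f)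
    (hD : D ∈ doublyStochastic ℝ n) (hx : ∀ j, x j ∈ s)
    (h : ∑ k, f ((D *ᵥ x) k) = ∑ j, f (x j)) {k j : n} (hkj : D k j ≠ 0) :
    x j = (D *ᵥ x) k := by
  rw [mem_doublyStochastic_iff_mem_rowStochastic_and_mem_colStochastic] at hD
  rw [sum_eq_sum_sum_smul_of_mem_colStochastic hD.2 fun j => f (x j)] at h
  have hk := (Finset.sum_eq_sum_iff_of_le fun k _ =>
    hf.concaveOn.sum_smul_le_mulVec_of_mem_rowStochastic hD.1 hx k).1 h.symm k
    (Finset.mem_univ k)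
  exact (hf.map_sum_eq_iff' (fun _ _ => nonneg_of_mem_rowStochastic hD.1)
    (sum_row_of_mem_rowStochastic hD.1 k) fun j _ => hx j).1 hk.symm j (Finset.mem_univ j) hkj

end DoublyStochastic

namespace Matrix
variable {n : Type*} [Fintype n] [DecidableEq n]

lemma mul_diagonal_mul_conjTranspose_apply_self (M : Matrix n n ℂ) (d : n → ℝ) (k : n) :
    (M * diagonal (RCLike.ofReal ∘ d : n → ℂ) * Mᴴ) k k =
      ((∑ j, Complex.normSq (M k j) * d j : ℝ) : ℂ) := by
  rw [mul_apply]
  push_cast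
  refine Finset.sum_congr rfl fun j _ => ?_
  simp only [mul_diagonal, conjTranspose_apply, Function.comp_apply,
    Complex.normSq_eq_conj_mul_self, RCLike.star_def, RCLike.ofReal_eq_complex_ofReal]
  ring

lemma mul_conjTranspose_apply_self (M : Matrix n n ℂ) (k : n) :
    (M * Mᴴ) k k = ((∑ j, Complex.normSq (M k j) : ℝ) : ℂ) := by
  simpa using mul_diagonal_mul_conjTranspose_apply_self M 1 k

lemma conjTranspose_mul_apply_self (M : Matrix n n ℂ) (j : n) :
    (Mᴴ * M) j j = ((∑ k, Complex.normSq (M k j) : ℝ) : ℂ) := by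
  simpa using mul_conjTranspose_apply_self Mᴴ j

end Matrix

namespace Matrix.IsHermitian
variable {n : Type*} [Fintype n] [DecidableEq n] {A B : Matrix n n ℂ}

lemma conjTranspose_eigenvectorUnitary_mul_mul (hA : A.IsHermitian) :
    (hA.eigenvectorUnitary : Matrix n n ℂ)ᴴ * A * (hA.eigenvectorUnitary : Matrix n n ℂ) =
      diagonal (RCLike.ofReal ∘ hA.eigenvalues) := by
  simpa only [Unitary.conjStarAlgAut_star_apply, star_eq_conjTranspose] using
    hA.conjStarAlgAut_star_eigenvectorUnitary

lemma eigenvectorUnitary_mul_diagonal_mul_conjTranspose (hA : A.IsHermitian) :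
    (hA.eigenvectorUnitary : Matrix n n ℂ) * diagonal (RCLike.ofReal ∘ hA.eigenvalues) *
      (hA.eigenvectorUnitary : Matrix n n ℂ)ᴴ = A := by
  simpa only [Unitary.conjStarAlgAut_apply, star_eq_conjTranspose] using hA.spectral_theorem.symm

lemma mul_eq_mul_of_eigenvalues_eq (hA : A.IsHermitian) (hB : B.IsHermitian) {X : Matrix n n ℂ}
    (h : ∀ k j, ((hA.eigenvectorUnitary : Matrix n n ℂ)ᴴ * X *
      (hB.eigenvectorUnitary : Matrix n n ℂ)) k j ≠ 0 → hA.eigenvalues k = hB.eigenvalues j) :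
    A * X = X * B := by
  have hdA := hA.conjTranspose_eigenvectorUnitary_mul_mul
  have hdB := hB.conjTranspose_eigenvectorUnitary_mul_mul
  have hUA := Unitary.mul_star_self_of_mem hA.eigenvectorUnitary.2
  have hUB := Unitary.mul_star_self_of_mem hB.eigenvectorUnitary.2
  rw [star_eq_conjTranspose] at hUA hUB
  set UA : Matrix n n ℂ := ↑hA.eigenvectorUnitary
  set UB : Matrix n n ℂ := ↑hB.eigenvectorUnitary
  have hUA' (M : Matrix n n ℂ) : UA * (UAᴴ * M) = M := by rw [← mul_assoc, hUA, one_mul]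
  have hUB' (M : Matrix n n ℂ) : UB * (UBᴴ * M) = M := by rw [← mul_assoc, hUB, one_mul]
  set W := UAᴴ * X * UB
  have hW : diagonal (RCLike.ofReal ∘ hA.eigenvalues) * W =
      W * diagonal (RCLike.ofReal ∘ hB.eigenvalues) := by
    ext k j
    rw [diagonal_mul, mul_diagonal]
    by_cases hkj : W k j = 0
    · simp [hkj]
    · simp [h k j hkj, mul_comm]
  calc A * X = UA * (diagonal (RCLike.ofReal ∘ hA.eigenvalues) * W) * UBᴴ := by
        rw [← hdA]
        simp only [W, mul_assoc, hUA', hUB, mul_one]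
    _ = UA * (W * diagonal (RCLike.ofReal ∘ hB.eigenvalues)) * UBᴴ := by rw [hW]
    _ = X * B := by
        rw [← hdB]
        simp only [W, mul_assoc, hUA', hUB', hUB, mul_one]

end Matrix.IsHermitian

section KrausMap
variable {n ι : Type*} [Fintype n] [Fintype ι]

def krausMap (K : ι → Matrix n n ℂ) (ρ : Matrix n n ℂ) : Matrix n n ℂ :=
  ∑ i, K i * ρ * (K i)ᴴ

lemma posSemidef_krausMap (K : ι → Matrix n n ℂ) {ρ : Matrix n n ℂ} (hρ : ρ.PosSemidef) :
    (krausMap K ρ).PosSemidef :=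
  posSemidef_sum _ fun i _ => hρ.mul_mul_conjTranspose_same (K i)

def transitionMatrix (U V : Matrix n n ℂ) (K : ι → Matrix n n ℂ) : Matrix n n ℝ :=
  of fun k j => ∑ i, Complex.normSq ((Uᴴ * K i * V) k j)

variable [DecidableEq n]

lemma sum_conj_mul_conjTranspose {V : Matrix n n ℂ} (hV : V ∈ unitaryGroup n ℂ)
    (U : Matrix n n ℂ) (K : ι → Matrix n n ℂ) :
    ∑ i, (Uᴴ * K i * V) * (Uᴴ * K i * V)ᴴ = Uᴴ * (∑ i, K i * (K i)ᴴ) * U := by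
  have hV' (M : Matrix n n ℂ) : V * (Vᴴ * M) = M := by
    rw [← mul_assoc, ← star_eq_conjTranspose, Unitary.mul_star_self_of_mem hV, one_mul]
  simp only [conjTranspose_mul, conjTranspose_conjTranspose, mul_assoc, hV', Finset.mul_sum,
    Finset.sum_mul]

lemma sum_conjTranspose_mul_conj {U : Matrix n n ℂ} (hU : U ∈ unitaryGroup n ℂ)
    (V : Matrix n n ℂ) (K : ι → Matrix n n ℂ) :
    ∑ i, (Uᴴ * K i * V)ᴴ * (Uᴴ * K i * V) = Vᴴ * (∑ i, (K i)ᴴ * K i) * V := by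
  have hU' (M : Matrix n n ℂ) : U * (Uᴴ * M) = M := by
    rw [← mul_assoc, ← star_eq_conjTranspose, Unitary.mul_star_self_of_mem hU, one_mul]
  simp only [conjTranspose_mul, conjTranspose_conjTranspose, mul_assoc, hU', Finset.mul_sum,
    Finset.sum_mul]

variable {K : ι → Matrix n n ℂ} {U V : Matrix n n ℂ}

lemma transitionMatrix_mem_doublyStochastic (hU : U ∈ unitaryGroup n ℂ)
    (hV : V ∈ unitaryGroup n ℂ) (hunital : ∑ i, K i * (K i)ᴴ = 1)
    (htrace : ∑ i, (K i)ᴴ * K i = 1) :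
    transitionMatrix U V K ∈ doublyStochastic ℝ n := by
  have hrow : ∑ i, (Uᴴ * K i * V) * (Uᴴ * K i * V)ᴴ = 1 := by
    rw [sum_conj_mul_conjTranspose hV, hunital, mul_one, ← star_eq_conjTranspose,
      Unitary.star_mul_self_of_mem hU]
  have hcol : ∑ i, (Uᴴ * K i * V)ᴴ * (Uᴴ * K i * V) = 1 := by
    rw [sum_conjTranspose_mul_conj hU, htrace, mul_one, ← star_eq_conjTranspose,
      Unitary.star_mul_self_of_mem hV]
  refine mem_doublyStochastic_iff_sum.2 ⟨fun k j => Finset.sum_nonneg fun i _ =>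
    Complex.normSq_nonneg _, fun k => ?_, fun j => ?_⟩
  · have := congr_fun₂ hrow k k
    simp only [Matrix.sum_apply, mul_conjTranspose_apply_self, one_apply_eq] at this
    simp only [transitionMatrix, of_apply]
    rw [Finset.sum_comm]
    exact_mod_cast this
  · have := congr_fun₂ hcol j j
    simp only [Matrix.sum_apply, conjTranspose_mul_apply_self, one_apply_eq] at this
    simp only [transitionMatrix, of_apply]
    rw [Finset.sum_comm]
    exact_mod_cast this

end KrausMap

section Entropy
variable {n ι : Type*} [Fintype n] [DecidableEq n] [Fintype ι] {K : ι → Matrix n n ℂ}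
  {ρ : Matrix n n ℂ}

lemma eigenvalues_krausMap (hρ : ρ.IsHermitian) (hσ : (krausMap K ρ).IsHermitian) :
    hσ.eigenvalues = transitionMatrix ↑hσ.eigenvectorUnitary ↑hρ.eigenvectorUnitary K *ᵥ
      hρ.eigenvalues := by
  have hρV := hρ.eigenvectorUnitary_mul_diagonal_mul_conjTranspose.symm
  set U : Matrix n n ℂ := ↑hσ.eigenvectorUnitary
  set V : Matrix n n ℂ := ↑hρ.eigenvectorUnitary
  have hconj : Uᴴ * krausMap K ρ * U =
      ∑ i, (Uᴴ * K i * V) * diagonal (RCLike.ofReal ∘ hρ.eigenvalues) * (Uᴴ * K i * V)ᴴ := by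
    conv_lhs => rw [hρV]
    simp only [krausMap, Finset.mul_sum, Finset.sum_mul, mul_assoc, conjTranspose_mul,
      conjTranspose_conjTranspose]
  funext k
  have hk := congr_fun₂ (hσ.conjTranspose_eigenvectorUnitary_mul_mul.symm.trans hconj) k k
  simp only [diagonal_apply_eq, Function.comp_apply, Matrix.sum_apply,
    mul_diagonal_mul_conjTranspose_apply_self] at hk
  rw [RCLike.ofReal_eq_complex_ofReal, ← Complex.ofReal_sum] at hk
  simp only [mulVec, dotProduct, transitionMatrix, of_apply, Finset.sum_mul]
  rw [Finset.sum_comm]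
  exact_mod_cast hk

variable (hunital : ∑ i, K i * (K i)ᴴ = 1) (htrace : ∑ i, (K i)ᴴ * K i = 1)
include hunital htrace

theorem vnEntropy_le_vnEntropy_krausMap (hρ : ρ.PosSemidef) :
    vnEntropy ρ ≤ vnEntropy (krausMap K ρ) := by
  have hσ := (posSemidef_krausMap K hρ).isHermitian
  rw [vnEntropy, vnEntropy, dif_pos hρ.isHermitian, dif_pos hσ,
    eigenvalues_krausMap hρ.isHermitian hσ]
  exact Real.concaveOn_negMulLog.sum_le_sum_mulVec_of_mem_doublyStochastic
    (transitionMatrix_mem_doublyStochastic hσ.eigenvectorUnitary.2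
      hρ.isHermitian.eigenvectorUnitary.2 hunital htrace) fun j => hρ.eigenvalues_nonneg j

theorem krausMap_mul_eq_mul_of_vnEntropy_eq (hρ : ρ.PosSemidef)
    (h : vnEntropy (krausMap K ρ) = vnEntropy ρ) (i : ι) :
    krausMap K ρ * K i = K i * ρ := by
  have hσ := (posSemidef_krausMap K hρ).isHermitian
  have hD := transitionMatrix_mem_doublyStochastic hσ.eigenvectorUnitary.2
    hρ.isHermitian.eigenvectorUnitary.2 hunital htrace
  rw [vnEntropy, vnEntropy, dif_pos hρ.isHermitian, dif_pos hσ,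
    eigenvalues_krausMap hρ.isHermitian hσ] at h
  refine hσ.mul_eq_mul_of_eigenvalues_eq hρ.isHermitian fun k j hkj => ?_
  rw [eigenvalues_krausMap hρ.isHermitian hσ]
  refine (Real.strictConcaveOn_negMulLog.eq_mulVec_of_sum_mulVec_eq hD
    (fun j => hρ.eigenvalues_nonneg j) h ?_).symm
  rw [transitionMatrix, of_apply]
  refine (Finset.sum_pos' (fun _ _ => Complex.normSq_nonneg _) ⟨i, Finset.mem_univ i, ?_⟩).ne'
  exact Complex.normSq_pos.2 hkj

end Entropy

section Projectors
variable {ι n : Type*} [Fintype n] [DecidableEq ι] {v : ι → n → ℂ}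

lemma proj_mul_proj (hv : Orthonormal' v) (i j : ι) :
    proj v i * proj v j = if i = j then proj v i else 0 := by
  rw [proj, proj, ketbra, ketbra, vecMulVec_mul_vecMulVec, hv i j]
  split_ifs with h
  · rw [h, one_smul]
  · rw [zero_smul, vecMulVec_zero]

omit [Fintype n] [DecidableEq ι] in
lemma conjTranspose_proj (v : ι → n → ℂ) (i : ι) : (proj v i)ᴴ = proj v i := by
  rw [proj, ketbra, conjTranspose_vecMulVec, star_star]

lemma trace_proj (hv : Orthonormal' v) (i : ι) : (proj v i).trace = 1 := by
  rw [proj, ketbra, trace_vecMulVec, dotProduct_comm]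
  exact (hv i i).trans (if_pos rfl)

lemma conjTranspose_proj_kronecker_one {ι A B : Type*} [DecidableEq B] (v : ι → A → ℂ)
    (i : ι) :
    (proj v i ⊗ₖ (1 : Matrix B B ℂ))ᴴ = proj v i ⊗ₖ (1 : Matrix B B ℂ) := by
  rw [conjTranspose_kronecker, conjTranspose_proj, conjTranspose_one]

end Projectors

section Pinching
variable {ι A B : Type*} [Fintype ι] [DecidableEq ι] [Fintype A] [DecidableEq A] [Fintype B]
  [DecidableEq B] {v : ι → A → ℂ} {ρ : Matrix (A × B) (A × B) ℂ}

omit [DecidableEq ι] [DecidableEq A] in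
lemma pinch_eq_krausMap (v : ι → A → ℂ) (ρ : Matrix (A × B) (A × B) ℂ) :
    pinch v ρ = krausMap (fun i => proj v i ⊗ₖ (1 : Matrix B B ℂ)) ρ := by
  simp only [pinch, krausMap, conjTranspose_proj_kronecker_one]

omit [DecidableEq ι] [Fintype B] in
lemma sum_proj_kronecker_one (hc : Complete' v) :
    ∑ i, proj v i ⊗ₖ (1 : Matrix B B ℂ) = 1 := by
  rw [← one_kronecker_one, ← hc]
  exact (map_sum ((kroneckerBilinear (R := ℂ)).flip 1) _ _).symm

lemma sum_proj_kronecker_one_mul_conjTranspose (hv : Orthonormal' v) (hc : Complete' v) :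
    ∑ i, (proj v i ⊗ₖ (1 : Matrix B B ℂ)) * (proj v i ⊗ₖ (1 : Matrix B B ℂ))ᴴ = 1 := by
  simp only [conjTranspose_proj_kronecker_one, ← mul_kronecker_mul, proj_mul_proj hv, if_true,
    mul_one, sum_proj_kronecker_one hc]

theorem vnEntropy_le_vnEntropy_pinch (hv : Orthonormal' v) (hc : Complete' v)
    (hρ : ρ.PosSemidef) : vnEntropy ρ ≤ vnEntropy (pinch v ρ) := by
  have hK := sum_proj_kronecker_one_mul_conjTranspose (B := B) hv hc
  rw [pinch_eq_krausMap]
  exact vnEntropy_le_vnEntropy_krausMap hK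
    (by simpa only [conjTranspose_proj_kronecker_one] using hK) hρ

theorem pinch_eq_self_of_vnEntropy_eq (hv : Orthonormal' v) (hc : Complete' v)
    (hρ : ρ.PosSemidef) (h : vnEntropy (pinch v ρ) = vnEntropy ρ) : pinch v ρ = ρ := by
  have hK := sum_proj_kronecker_one_mul_conjTranspose (B := B) hv hc
  rw [pinch_eq_krausMap] at h ⊢
  have hcomm := krausMap_mul_eq_mul_of_vnEntropy_eq hK
    (by simpa only [conjTranspose_proj_kronecker_one] using hK) hρ h
  calc _ = ∑ i, krausMap (fun i => proj v i ⊗ₖ (1 : Matrix B B ℂ)) ρ * (proj v i ⊗ₖ 1) := by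
        rw [← Finset.mul_sum, sum_proj_kronecker_one hc, mul_one]
    _ = ∑ i, (proj v i ⊗ₖ 1) * ρ := Finset.sum_congr rfl fun i _ => hcomm i
    _ = ρ := by rw [← Finset.sum_mul, sum_proj_kronecker_one hc, one_mul]

omit [DecidableEq ι] [DecidableEq A] in
lemma pinch_eq_sum_proj_kronecker_Oij (v : ι → A → ℂ) (ρ : Matrix (A × B) (A × B) ℂ) :
    pinch v ρ = ∑ i, proj v i ⊗ₖ Oij v ρ i i := by
  refine Finset.sum_congr rfl fun i _ => ?_
  ext ⟨a, k⟩ ⟨b, l⟩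
  simp only [mul_apply, kroneckerMap_apply, one_apply, proj, ketbra, vecMulVec_apply, Oij,
    Pi.star_apply, Fintype.sum_prod_type, mul_ite, mul_zero, mul_one, ite_mul, zero_mul,
    Finset.sum_ite_eq, Finset.sum_ite_eq', Finset.mem_univ, if_true]
  simp only [Finset.sum_mul, Finset.mul_sum]
  rw [Finset.sum_comm]
  exact Finset.sum_congr rfl fun _ _ => Finset.sum_congr rfl fun _ _ => by ring

omit [Fintype ι] [DecidableEq ι] [DecidableEq A] in
lemma posSemidef_Oij_self (hρ : ρ.PosSemidef) (v : ι → A → ℂ) (i : ι) :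
    (Oij v ρ i i).PosSemidef := by
  have hX : Oij v ρ i i = (of fun (q : A × B) l => v i q.1 * (1 : Matrix B B ℂ) q.2 l)ᴴ * ρ *
      of fun (q : A × B) l => v i q.1 * (1 : Matrix B B ℂ) q.2 l := by
    ext k l
    simp only [mul_apply, conjTranspose_apply, of_apply, Oij, one_apply, Fintype.sum_prod_type,
      mul_ite, mul_zero, mul_one, ite_mul, zero_mul, apply_ite star, star_zero,
      Finset.sum_ite_eq', Finset.mem_univ, if_true, Finset.sum_mul]
    rw [Finset.sum_comm]
  rw [hX]
  exact hρ.conjTranspose_mul_mul_same _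

end Pinching

lemma isCQ_of_eq_sum_proj_kronecker {A B : Type*} [Fintype A] [DecidableEq A] [Fintype B]
    {ρ : Matrix (A × B) (A × B) ℂ} {v : A → A → ℂ} {σ : A → Matrix B B ℂ}
    (hv : Orthonormal' v) (hc : Complete' v) (hσ : ∀ i, (σ i).PosSemidef)
    (hρ : ρ = ∑ i, proj v i ⊗ₖ σ i) (htr : ρ.trace = 1) : IsCQ ρ := by
  set p : A → ℝ := fun i => (σ i).trace.re
  have hp i : (σ i).trace = p i := Complex.eq_re_of_ofReal_le (r := 0) (by
    rw [Complex.ofReal_zero]; exact (hσ i).trace_nonneg)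
  have hp0 i : 0 ≤ p i := Complex.zero_le_real.1 (hp i ▸ (hσ i).trace_nonneg)
  refine ⟨v, p, fun i => (p i : ℂ)⁻¹ • σ i, hv, hc, hp0, ?_, fun i hi => ⟨?_, ?_⟩, ?_⟩
  · apply Complex.ofReal_injective
    rw [Complex.ofReal_sum, Complex.ofReal_one, ← htr, hρ, trace_sum]
    simp only [trace_kronecker, trace_proj hv, one_mul, hp]
  · refine (hσ i).smul ?_
    rw [← Complex.ofReal_inv]
    exact Complex.zero_le_real.2 (inv_nonneg.2 (hp0 i))
  · rw [trace_smul, hp, smul_eq_mul, inv_mul_cancel₀ (Complex.ofReal_ne_zero.2 hi)]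
  · rw [hρ]
    refine Finset.sum_congr rfl fun i _ => ?_
    rw [kronecker_smul, smul_smul]
    -- `p i = 0` forces `σ i = 0`, so the junk value `(0 : ℂ)⁻¹ = 0` does no harm.
    by_cases hi : p i = 0
    · rw [(hσ i).trace_eq_zero_iff.1 (by rw [hp, hi, Complex.ofReal_zero]), kronecker_zero,
        smul_zero]
    · rw [mul_inv_cancel₀ (Complex.ofReal_ne_zero.2 hi), one_smul]

/-- strict positivity of created entanglement: if `ρ` is not a
classical-quantum state, then every von Neumann measurement on `A` strictly increases
the entropy: `S(∑ i (Π_i⊗I)ρ(Π_i⊗I)) - S(ρ) > 0`. -/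
theorem pinch_entropy_pos_of_not_cq {A B : Type*} [Fintype A] [DecidableEq A]
    [Fintype B] [DecidableEq B]
    (ρ : Matrix (A × B) (A × B) ℂ) (hρ : IsDensityMatrix ρ) (hcq : ¬ IsCQ ρ) :
    ∀ v : A → A → ℂ, IsMeas v → 0 < vnEntropy (pinch v ρ) - vnEntropy ρ := by
  rintro v ⟨hv, hc⟩
  refine sub_pos.2 ((vnEntropy_le_vnEntropy_pinch hv hc hρ.1).lt_of_ne fun heq => hcq ?_)
  have hfix := pinch_eq_self_of_vnEntropy_eq hv hc hρ.1 heq.symm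
  exact isCQ_of_eq_sum_proj_kronecker hv hc (posSemidef_Oij_self hρ.1 v)
    (hfix.symm.trans (pinch_eq_sum_proj_kronecker_Oij v ρ)) hρ.2
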